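/- For any integer d ≥ 3, the d-dimensional hypercube Q_d is reflective. -/

import Mathlib

open SimpleGraph

/-- `hom(H, G)`: the number of graph homomorphisms from `H` to `G`. -/
noncomputable def homCount {α β : Type} (H : SimpleGraph α) (G : SimpleGraph β) : ℕ :=
  Nat.card (H →g G)

/-- `hom(H, G; R)`: homomorphisms mapping all of `R` to one common vertex. -/
noncomputable def homCountOn {α β : Type} (H : SimpleGraph α) (G : SimpleGraph β)
    (R : Set α) : ℕ :=
  Nat.card {f : H →g G // ∃ v : β, ∀ u ∈ R, f u = v}

/-- The fixed-point set `F_φ` of a graph automorphism `φ`. -/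
def FixedSet {V : Type} {H : SimpleGraph V} (φ : H ≃g H) : Set V := {v | φ v = v}

/-- `(A, B, φ)` is a nice triple of `H`: `φ` is an involutive automorphism; `A`, `B` and
`F_φ` partition `V(H)`; `F_φ` separates `A` and `B` (every walk from `A` to `B` meets
`F_φ`); and `φ(A) = B`. -/
def IsNiceTriple {V : Type} (H : SimpleGraph V) (A B : Set V) (φ : H ≃g H) : Prop :=
  (∀ v, φ (φ v) = v) ∧
  Disjoint A B ∧ Disjoint A (FixedSet φ) ∧ Disjoint B (FixedSet φ) ∧
  A ∪ B ∪ FixedSet φ = Set.univ ∧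
  (∀ a ∈ A, ∀ b ∈ B, ∀ w : H.Walk a b, ∃ v ∈ w.support, v ∈ FixedSet φ) ∧
  ⇑φ '' A = B

/-- `H` is bipartite with parts `X₁` and `X₂`. -/
def IsBipartitionOf {V : Type} (H : SimpleGraph V) (X₁ X₂ : Set V) : Prop :=
  Disjoint X₁ X₂ ∧ X₁ ∪ X₂ = Set.univ ∧
  ∀ ⦃u v⦄, H.Adj u v → (u ∈ X₁ ∧ v ∈ X₂) ∨ (u ∈ X₂ ∧ v ∈ X₁)

/-- `R` is admissible for the nice triple `(A, B, φ)` (relative to the bipartition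
`X₁, X₂` of `H`): all vertices of `R` lie in the same part, and `R` meets both
`A ∪ F_φ` and `B ∪ F_φ`. -/
def IsAdmissible {V : Type} {H : SimpleGraph V} (X₁ X₂ A B : Set V) (φ : H ≃g H)
    (R : Set V) : Prop :=
  (R ⊆ X₁ ∨ R ⊆ X₂) ∧ (R ∩ (A ∪ FixedSet φ)).Nonempty ∧ (R ∩ (B ∪ FixedSet φ)).Nonempty

/-- `ψ_{A,B,φ}(R) = (R ∩ (A ∪ F_φ)) ∪ φ(R ∩ A)`. -/
def psiSet {V : Type} {H : SimpleGraph V} (A : Set V) (φ : H ≃g H) (R : Set V) : Set V :=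
  (R ∩ (A ∪ FixedSet φ)) ∪ ⇑φ '' (R ∩ A)

/-- `H` (connected bipartite, with parts `X₁, X₂`) is reflective: every two-element
subset `R` of a part `X` can be transformed into `X` by a sequence of reflections
`R_{j+1} = ψ_{A_j,B_j,φ_j}(R_j)` along nice triples for which `R_j` is admissible. -/
def IsReflective {V : Type} (H : SimpleGraph V) (X₁ X₂ : Set V) : Prop :=
  ∀ X : Set V, X = X₁ ∨ X = X₂ → ∀ R : Set V, R ⊆ X → R.ncard = 2 →
    ∃ (m : ℕ) (A B : ℕ → Set V) (φ : ℕ → (H ≃g H)) (Rs : ℕ → Set V),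
      Rs 0 = R ∧ Rs m = X ∧
      ∀ j < m, IsNiceTriple H (A j) (B j) (φ j) ∧
        IsAdmissible X₁ X₂ (A j) (B j) (φ j) (Rs j) ∧
        Rs (j + 1) = psiSet (A j) (φ j) (Rs j)

/-- The `d`-dimensional hypercube `Q_d`: vertices are `{0,1}^d`, two vertices being
adjacent iff they differ in exactly one coordinate. -/
def hypercube (d : ℕ) : SimpleGraph (Fin d → Bool) where
  Adj x y := (Finset.univ.filter fun i => x i ≠ y i).card = 1
  symm := by
    constructor
    intro x y h
    try dsimp only at h ⊢
    have h' : (Finset.univ.filter fun i => y i ≠ x i)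
        = (Finset.univ.filter fun i => x i ≠ y i) := by
      apply Finset.filter_congr
      intro i _
      exact ne_comm
    rw [h']
    exact h
  loopless := by
    constructor
    intro x h
    simp at h

/-!
For `k ≠ l` and `s : Bool`, exchanging the coordinates `k`, `l` and then adding `s` to both is
an involutive automorphism of `Q_d` whose fixed vertices are those with `x k + x l = s`. The
two remaining quadrants `{x k = a, x l = b}` and `{x k = ¬a, x l = ¬b}` differ in two
coordinates, so no edge joins them, and they form a nice triple with this reflection.

Fix a part `X` and `u ∈ X`; since `X` is a parity class, `X = {x | dist(x, u) even}`. Let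
`F(u, S)` be the vertices of `X` that agree with `u` outside `S`. Any `v ∈ X \ {u}` differs
from `u` in an even, hence at least two, number of coordinates `k, l`, and the reflection with
`u ∈ A`, `v ∈ B` turns `{u, v}` into `{u, u + e_k + e_l} = F(u, {k, l})`. If `l ∈ S`,
`|S| ≥ 2` and `k ∉ S`, then `F(u, S)` grows to `F(u, S ∪ {k})` in two reflections: the
swap of `k, l` copies the vertices with `x l ≠ u k` to the quadrant `x k ≠ u k = x l`, and
the swap-and-flip then fills the quadrant `x k = x l ≠ u k`; a second coordinate `m ∈ S`
supplies the vertex of `F(u, S)` in the fixed set that admissibility requires. Growing `S` to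
all coordinates gives `F(u, univ) = X`.
-/

theorem Relation.ReflTransGen.exists_seq {α : Type*} {r : α → α → Prop} {a b : α}
    (h : Relation.ReflTransGen r a b) :
    ∃ (n : ℕ) (f : ℕ → α), f 0 = a ∧ f n = b ∧ ∀ i < n, r (f i) (f (i + 1)) := by
  induction h with
  | refl => exact ⟨0, fun _ => a, rfl, rfl, fun _ hi => absurd hi (Nat.not_lt_zero _)⟩
  | @tail b c _ hbc ih =>
    obtain ⟨n, f, hf0, hfn, hf⟩ := ih
    refine ⟨n + 1, fun i => if i ≤ n then f i else c, by simpa using hf0, by simp,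
      fun i hi => ?_⟩
    rcases Nat.lt_succ_iff_lt_or_eq.mp hi with hi | rfl
    · simpa [hi.le, Nat.succ_le_of_lt hi] using hf i hi
    · simpa [hfn] using hbc

namespace SimpleGraph

variable {V : Type} {H : SimpleGraph V} {X₁ X₂ A B R : Set V} {φ : H ≃g H}

def ReflectionStep (H : SimpleGraph V) (X₁ X₂ R R' : Set V) : Prop :=
  ∃ (A B : Set V) (φ : H ≃g H),
    IsNiceTriple H A B φ ∧ IsAdmissible X₁ X₂ A B φ R ∧ R' = psiSet A φ R

theorem isReflective_of_reflTransGen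
    (h : ∀ X : Set V, X = X₁ ∨ X = X₂ → ∀ R ⊆ X, R.ncard = 2 →
      Relation.ReflTransGen (ReflectionStep H X₁ X₂) R X) :
    IsReflective H X₁ X₂ := by
  intro X hX R hRX hR
  obtain ⟨m, Rs, h0, hm, hstep⟩ := (h X hX R hRX hR).exists_seq
  choose! A B φ hnice hadm hψ using hstep
  exact ⟨m, A, B, φ, Rs, h0, hm, fun j hj => ⟨hnice j hj, hadm j hj, hψ j hj⟩⟩

theorem Walk.exists_mem_support_of_forall_not_adj {F : Set V} (hcover : A ∪ B ∪ F = Set.univ)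
    (hAB : Disjoint A B) (hadj : ∀ x ∈ A, ∀ y ∈ B, ¬ H.Adj x y) {a b : V} (ha : a ∈ A)
    (hb : b ∈ B) (w : H.Walk a b) : ∃ v ∈ w.support, v ∈ F := by
  obtain ⟨e, he, heA, heA'⟩ := w.exists_boundary_dart A ha (Set.disjoint_right.mp hAB hb)
  refine ⟨e.snd, w.dart_snd_mem_support_of_mem_darts he, ?_⟩
  have : e.snd ∈ A ∪ B ∪ F := hcover ▸ Set.mem_univ _
  rcases this with (h | h) | h
  · exact absurd h heA'
  · exact absurd e.adj (hadj _ heA _ h)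
  · exact h

theorem reflectionStep_pair (hφ : IsNiceTriple H A B φ) {u v : V}
    (hpart : {u, v} ⊆ X₁ ∨ {u, v} ⊆ X₂) (hu : u ∈ A) (hv : v ∈ B) :
    ReflectionStep H X₁ X₂ {u, v} {u, φ u} := by
  have hvA : v ∉ A := Set.disjoint_right.mp hφ.2.1 hv
  have hvF : v ∉ FixedSet φ := Set.disjoint_left.mp hφ.2.2.2.1 hv
  refine ⟨A, B, φ, hφ, ⟨hpart, ⟨u, by simp [hu]⟩, ⟨v, by simp [hv]⟩⟩, ?_⟩
  ext x
  simp only [psiSet, Set.mem_insert_iff, Set.mem_singleton_iff, Set.mem_union,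
    Set.mem_inter_iff, Set.mem_image]
  constructor
  · rintro (rfl | rfl)
    · exact Or.inl ⟨Or.inl rfl, Or.inl hu⟩
    · exact Or.inr ⟨u, ⟨Or.inl rfl, hu⟩, rfl⟩
  · rintro (⟨rfl | rfl, h⟩ | ⟨y, ⟨rfl | rfl, h⟩, rfl⟩)
    · exact Or.inl rfl
    · exact absurd h (by simp [hvA, hvF])
    · exact Or.inr rfl
    · exact absurd h hvA

theorem reflectionStep_of_subset_union_fixedSet (hφ : IsNiceTriple H A B φ)
    (hpart : R ⊆ X₁ ∨ R ⊆ X₂) (hR : R ⊆ A ∪ FixedSet φ) (hRF : (R ∩ FixedSet φ).Nonempty) :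
    ReflectionStep H X₁ X₂ R (R ∪ φ '' (R ∩ A)) := by
  refine ⟨A, B, φ, hφ, ⟨hpart, hRF.mono ?_, hRF.mono ?_⟩, by
    rw [psiSet, Set.inter_eq_left.mpr hR]⟩ <;>
  exact Set.inter_subset_inter_right _ Set.subset_union_right

end SimpleGraph

theorem eq_of_eqOn_compl_pair {ι : Type*} {β : ι → Type*} {k l : ι} {x y : ∀ i, β i}
    (hxy : ∀ m, m ≠ k → m ≠ l → x m = y m) (hk : x k = y k) (hl : x l = y l) : x = y := by
  funext m
  by_cases hmk : m = k
  · rw [hmk, hk]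
  by_cases hml : m = l
  · rw [hml, hl]
  exact hxy m hmk hml

section Hamming

open Finset

variable {ι : Type*} [Fintype ι]

theorem hammingDist_add_hammingDist_bool (x y z : ι → Bool) :
    hammingDist x y + hammingDist y z =
      hammingDist x z + 2 * #{i | x i ≠ y i ∧ y i ≠ z i} := by
  simp only [hammingDist, card_filter, ← sum_add_distrib, mul_sum]
  refine sum_congr rfl fun i _ => ?_
  cases x i <;> cases y i <;> cases z i <;> rfl

theorem even_hammingDist_bool_iff (x y z : ι → Bool) :
    Even (hammingDist x z) ↔ (Even (hammingDist x y) ↔ Even (hammingDist y z)) := by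
  rw [← Nat.even_add, hammingDist_add_hammingDist_bool]
  simp [Nat.even_add]

theorem card_filter_eq_true_eq_hammingDist (x : ι → Bool) :
    #{i | x i = true} = hammingDist x (fun _ => false) := by
  simp [hammingDist]

theorem eq_setOf_even_hammingDist {X : Set (ι → Bool)}
    (hX : X = {x | Even #{i | x i = true}} ∨ X = {x | Odd #{i | x i = true}})
    {u : ι → Bool} (hu : u ∈ X) : X = {x | Even (hammingDist x u)} := by
  ext x
  have := even_hammingDist_bool_iff x (fun _ => false) u
  rcases hX with rfl | rfl <;>
    simp_all [card_filter_eq_true_eq_hammingDist, hammingDist_comm u, ← Nat.not_even_iff_odd]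

variable [DecidableEq ι] {k l : ι}

theorem two_le_hammingDist_of_ne_of_ne {β : ι → Type*} [∀ i, DecidableEq (β i)]
    (hkl : k ≠ l) {x y : ∀ i, β i} (hk : x k ≠ y k) (hl : x l ≠ y l) :
    2 ≤ hammingDist x y := by
  rw [← card_pair hkl]
  exact card_le_card (by simp [insert_subset_iff, hk, hl])

theorem even_hammingDist_iff_of_eqOn_compl_pair (hkl : k ≠ l) {x y : ι → Bool}
    (hxy : ∀ m, m ≠ k → m ≠ l → x m = y m) :
    Even (hammingDist x y) ↔ (x k = y k ↔ x l = y l) := by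
  have : hammingDist x y = ∑ i ∈ {k, l}, if x i ≠ y i then 1 else 0 := by
    rw [hammingDist, card_filter]
    refine (sum_subset (subset_univ _) fun i _ hi => ?_).symm
    simp only [mem_insert, mem_singleton, not_or] at hi
    simp [hxy i hi.1 hi.2]
  rw [this, sum_pair hkl]
  cases x k <;> cases y k <;> cases x l <;> cases y l <;> decide

end Hamming

section CubeReflection

variable {ι : Type*} [DecidableEq ι] {k l : ι} {s : Bool} (x : ι → Bool)

def cubeReflection (k l : ι) (s : Bool) (x : ι → Bool) : ι → Bool :=
  fun m => if m = k then xor (x l) s else if m = l then xor (x k) s else x m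

@[simp] theorem cubeReflection_apply_left : cubeReflection k l s x k = xor (x l) s := by
  simp [cubeReflection]

@[simp] theorem cubeReflection_apply_right (hkl : k ≠ l) :
    cubeReflection k l s x l = xor (x k) s := by
  simp [cubeReflection, hkl.symm]

theorem cubeReflection_apply_of_ne {m : ι} (hk : m ≠ k) (hl : m ≠ l) :
    cubeReflection k l s x m = x m := by
  simp [cubeReflection, hk, hl]

theorem cubeReflection_involutive (k l : ι) (s : Bool) :
    Function.Involutive (cubeReflection k l s) := by
  intro x
  funext m
  unfold cubeReflection
  split_ifs <;> simp_all

theorem hammingDist_cubeReflection [Fintype ι] (y : ι → Bool) :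
    hammingDist (cubeReflection k l s x) (cubeReflection k l s y) = hammingDist x y := by
  refine Finset.card_equiv (Equiv.swap k l) fun m => ?_
  rw [Finset.mem_filter, Finset.mem_filter]
  simp only [Finset.mem_univ, true_and, cubeReflection, Equiv.swap_apply_def]
  split_ifs <;> simp_all

theorem cubeReflection_eq_self_iff (hkl : k ≠ l) :
    cubeReflection k l s x = x ↔ xor (x k) (x l) = s := by
  constructor
  · intro h
    rw [← congrFun h k, cubeReflection_apply_left]
    cases x l <;> cases s <;> rfl
  · rintro rfl
    funext m
    by_cases hk : m = k
    · subst hk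
      rw [cubeReflection_apply_left]
      cases x m <;> cases x l <;> rfl
    · by_cases hl : m = l
      · subst hl
        rw [cubeReflection_apply_right _ hkl]
        cases x k <;> cases x m <;> rfl
      · exact cubeReflection_apply_of_ne x hk hl

theorem even_hammingDist_cubeReflection_self [Fintype ι] (hkl : k ≠ l) :
    Even (hammingDist (cubeReflection k l s x) x) := by
  rw [even_hammingDist_iff_of_eqOn_compl_pair hkl fun m hk hl =>
    cubeReflection_apply_of_ne x hk hl, cubeReflection_apply_left, cubeReflection_apply_right _ hkl]
  cases x k <;> cases x l <;> cases s <;> simp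

end CubeReflection

section Hypercube

variable {d : ℕ} {k l : Fin d}

theorem hypercube_adj_iff {x y : Fin d → Bool} :
    (hypercube d).Adj x y ↔ hammingDist x y = 1 := Iff.rfl

def hypercubeReflection (k l : Fin d) (s : Bool) : hypercube d ≃g hypercube d where
  toEquiv := (cubeReflection_involutive k l s).toPerm
  map_rel_iff' {x y} := by
    simp only [Function.Involutive.coe_toPerm, hypercube_adj_iff, hammingDist_cubeReflection]

@[simp] theorem coe_hypercubeReflection (s : Bool) :
    ⇑(hypercubeReflection k l s) = cubeReflection k l s := rfl

theorem fixedSet_hypercubeReflection (hkl : k ≠ l) (s : Bool) :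
    FixedSet (hypercubeReflection k l s) = {x | xor (x k) (x l) = s} := by
  ext x
  exact cubeReflection_eq_self_iff x hkl

theorem isNiceTriple_hypercubeReflection (hkl : k ≠ l) {a b s : Bool} (hab : xor a b = !s) :
    IsNiceTriple (hypercube d) {x | x k = a ∧ x l = b} {x | x k = !a ∧ x l = !b}
      (hypercubeReflection k l s) := by
  obtain rfl : s = !(xor a b) := by rw [hab, Bool.not_not]
  have hcover : {x : Fin d → Bool | x k = a ∧ x l = b} ∪ {x | x k = !a ∧ x l = !b} ∪
      FixedSet (hypercubeReflection k l (!(xor a b))) = Set.univ := by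
    ext x
    simp only [fixedSet_hypercubeReflection hkl, Set.mem_union, Set.mem_ofPred_eq,
      Set.mem_univ, iff_true]
    cases x k <;> cases x l <;> cases a <;> cases b <;> simp
  have hAB : Disjoint {x : Fin d → Bool | x k = a ∧ x l = b} {x | x k = !a ∧ x l = !b} :=
    Set.disjoint_left.mpr fun x hA hB => by cases a <;> simp_all
  refine ⟨cubeReflection_involutive k l _, hAB, ?_, ?_, hcover, fun x hx y hy =>
    Walk.exists_mem_support_of_forall_not_adj hcover hAB ?_ hx hy, ?_⟩
  · rw [fixedSet_hypercubeReflection hkl]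
    exact Set.disjoint_left.mpr fun x ⟨hk, hl⟩ hF => by simp_all
  · rw [fixedSet_hypercubeReflection hkl]
    exact Set.disjoint_left.mpr fun x ⟨hk, hl⟩ hF => by simp_all
  · rintro x ⟨hxk, hxl⟩ y ⟨hyk, hyl⟩ hxy
    have := two_le_hammingDist_of_ne_of_ne hkl (x := x) (y := y) (by simp [hxk, hyk])
      (by simp [hxl, hyl])
    rw [hypercube_adj_iff.mp hxy] at this
    omega
  · rw [coe_hypercubeReflection, (cubeReflection_involutive k l _).image_eq_preimage_symm]
    ext x
    simp only [Set.mem_preimage, Set.mem_ofPred_eq, cubeReflection_apply_left,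
      cubeReflection_apply_right _ hkl]
    cases x k <;> cases x l <;> cases a <;> cases b <;> simp

end Hypercube

section EvenFace

variable {d : ℕ} {u x : Fin d → Bool} {S : Finset (Fin d)} {k l m : Fin d}
  {X₁ X₂ : Set (Fin d → Bool)}

def evenFace (u : Fin d → Bool) (S : Finset (Fin d)) : Set (Fin d → Bool) :=
  {x | Even (hammingDist x u) ∧ ∀ i ∉ S, x i = u i}

theorem self_mem_evenFace (u : Fin d → Bool) (S : Finset (Fin d)) : u ∈ evenFace u S :=
  ⟨by simp, fun _ _ => rfl⟩

theorem evenFace_mono {T : Finset (Fin d)} (hST : S ⊆ T) : evenFace u S ⊆ evenFace u T :=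
  fun _ ⟨hx, hxS⟩ => ⟨hx, fun i hi => hxS i (fun h => hi (hST h))⟩

theorem evenFace_univ (u : Fin d → Bool) :
    evenFace u Finset.univ = {x | Even (hammingDist x u)} := by
  simp [evenFace]

theorem mem_evenFace_of_mem_insert (hx : x ∈ evenFace u (insert k S)) (hxk : x k = u k) :
    x ∈ evenFace u S := by
  refine ⟨hx.1, fun i hi => ?_⟩
  by_cases hik : i = k
  · rw [hik, hxk]
  · exact hx.2 i (by simp [hik, hi])

theorem cubeReflection_mem_evenFace (hkl : k ≠ l) (hk : k ∈ S) (hl : l ∈ S) (s : Bool)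
    (hx : x ∈ evenFace u S) : cubeReflection k l s x ∈ evenFace u S := by
  refine ⟨(even_hammingDist_bool_iff _ x u).mpr (iff_of_true
    (even_hammingDist_cubeReflection_self x hkl) hx.1), fun i hi => ?_⟩
  rw [cubeReflection_apply_of_ne x (ne_of_mem_of_not_mem hk hi).symm
    (ne_of_mem_of_not_mem hl hi).symm]
  exact hx.2 i hi

theorem exists_mem_evenFace_apply_eq (hl : l ∈ S) (hm : m ∈ S) (hlm : l ≠ m) (c : Bool) :
    ∃ x ∈ evenFace u S, x l = c :=
  ⟨cubeReflection l m (xor (u m) c) u,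
    cubeReflection_mem_evenFace hlm hl hm _ (self_mem_evenFace u S), by simp⟩

theorem evenFace_pair (hkl : k ≠ l) (u : Fin d → Bool) :
    evenFace u {k, l} = {u, cubeReflection k l (!(xor (u k) (u l))) u} := by
  ext x
  constructor
  · rintro ⟨hx, hxkl⟩
    have hoff : ∀ m, m ≠ k → m ≠ l → x m = u m := fun m hk hl => hxkl m (by simp [hk, hl])
    have hpar := (even_hammingDist_iff_of_eqOn_compl_pair hkl hoff).mp hx
    by_cases hxk : x k = u k
    · exact .inl (eq_of_eqOn_compl_pair hoff hxk (hpar.mp hxk))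
    · refine .inr (eq_of_eqOn_compl_pair (k := k) (l := l) (fun m hk hl => ?_) ?_ ?_)
      · rw [hoff m hk hl, cubeReflection_apply_of_ne u hk hl]
      · rw [cubeReflection_apply_left]
        revert hxk hpar
        cases x k <;> cases x l <;> cases u k <;> cases u l <;> simp
      · rw [cubeReflection_apply_right u hkl]
        revert hxk hpar
        cases x k <;> cases x l <;> cases u k <;> cases u l <;> simp
  · rintro (rfl | rfl)
    · exact self_mem_evenFace x _
    · exact cubeReflection_mem_evenFace hkl (by simp) (by simp) _ (self_mem_evenFace u _)

theorem subset_or_subset_of_subset_evenFace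
    (hX : {x | Even (hammingDist x u)} ⊆ X₁ ∨ {x | Even (hammingDist x u)} ⊆ X₂)
    {R : Set (Fin d → Bool)} (hR : R ⊆ evenFace u S) : R ⊆ X₁ ∨ R ⊆ X₂ :=
  have hR' : R ⊆ {x | Even (hammingDist x u)} := fun _ hx => (hR hx).1
  hX.imp hR'.trans hR'.trans

theorem reflectionStep_evenFace_swap
    (hX : {x | Even (hammingDist x u)} ⊆ X₁ ∨ {x | Even (hammingDist x u)} ⊆ X₂)
    (hl : l ∈ S) (hm : m ∈ S) (hlm : l ≠ m) (hk : k ∉ S) :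
    ReflectionStep (hypercube d) X₁ X₂ (evenFace u S)
      {x ∈ evenFace u (insert k S) | x k = u k ∨ x l = u k} := by
  have hkl : k ≠ l := (ne_of_mem_of_not_mem hl hk).symm
  have hRk : ∀ x ∈ evenFace u S, x k = u k := fun x hx => hx.2 k hk
  convert reflectionStep_of_subset_union_fixedSet
    (isNiceTriple_hypercubeReflection hkl (a := u k) (b := !u k) (by cases u k <;> rfl))
    (subset_or_subset_of_subset_evenFace hX subset_rfl) (fun x hx => ?_) ?_ using 1
  · refine Set.Subset.antisymm (fun x ⟨hx, hxkl⟩ => ?_) (Set.union_subset ?_ ?_)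
    · by_cases hxk : x k = u k
      · exact .inl (mem_evenFace_of_mem_insert hx hxk)
      refine .inr ⟨cubeReflection k l false x,
        ⟨mem_evenFace_of_mem_insert (k := k) ?_ ?_, ?_⟩, cubeReflection_involutive k l false x⟩
      · exact cubeReflection_mem_evenFace hkl (by simp) (by simp [hl]) false hx
      all_goals simp [hkl, hxkl.resolve_left hxk, Bool.eq_not_of_ne hxk]
    · exact fun x hx => ⟨evenFace_mono (Finset.subset_insert k S) hx, .inl (hRk x hx)⟩
    · rintro _ ⟨y, ⟨hy, -, hyl⟩, rfl⟩
      refine ⟨cubeReflection_mem_evenFace hkl (by simp) (by simp [hl]) false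
        (evenFace_mono (Finset.subset_insert k S) hy), .inr ?_⟩
      simp [hkl, hRk y hy]
  · rw [fixedSet_hypercubeReflection hkl]
    simp only [Set.mem_union, Set.mem_ofPred_eq, hRk x hx]
    cases x l <;> cases u k <;> simp
  · obtain ⟨x, hxR, hxl⟩ := exists_mem_evenFace_apply_eq hl hm hlm (u k)
    refine ⟨x, hxR, ?_⟩
    rw [fixedSet_hypercubeReflection hkl]
    simp [hRk x hxR, hxl]

theorem reflectionStep_evenFace_flip
    (hX : {x | Even (hammingDist x u)} ⊆ X₁ ∨ {x | Even (hammingDist x u)} ⊆ X₂)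
    (hl : l ∈ S) (hm : m ∈ S) (hlm : l ≠ m) (hk : k ∉ S) :
    ReflectionStep (hypercube d) X₁ X₂
      {x ∈ evenFace u (insert k S) | x k = u k ∨ x l = u k} (evenFace u (insert k S)) := by
  have hkl : k ≠ l := (ne_of_mem_of_not_mem hl hk).symm
  have hT : ∀ s, ∀ x ∈ evenFace u (insert k S),
      cubeReflection k l s x ∈ evenFace u (insert k S) := fun s _ =>
    cubeReflection_mem_evenFace hkl (by simp) (by simp [hl]) s
  convert reflectionStep_of_subset_union_fixedSet
    (isNiceTriple_hypercubeReflection hkl (a := u k) (b := u k) (by cases u k <;> rfl))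
    (subset_or_subset_of_subset_evenFace hX (Set.sep_subset _ _)) (fun x hx => ?_) ?_ using 1
  · refine Set.Subset.antisymm (fun x hx => ?_) (Set.union_subset (Set.sep_subset _ _) ?_)
    · by_cases hxkl : x k = u k ∨ x l = u k
      · exact .inl ⟨hx, hxkl⟩
      obtain ⟨hxk, hxl⟩ := not_or.mp hxkl
      refine .inr ⟨cubeReflection k l true x, ⟨⟨hT true x hx, .inl ?_⟩, ?_, ?_⟩,
        cubeReflection_involutive k l true x⟩
      all_goals simp [hkl, Bool.eq_not_of_ne hxk, Bool.eq_not_of_ne hxl]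
    · rintro _ ⟨y, ⟨⟨hy, -⟩, -⟩, rfl⟩
      exact hT true y hy
  · rw [fixedSet_hypercubeReflection hkl]
    obtain ⟨-, hxk | hxl⟩ := hx
    · simp only [Set.mem_union, Set.mem_ofPred_eq, hxk]
      cases x l <;> cases u k <;> simp
    · simp only [Set.mem_union, Set.mem_ofPred_eq, hxl]
      cases x k <;> cases u k <;> simp
  · obtain ⟨x, hxR, hxl⟩ := exists_mem_evenFace_apply_eq (u := u) hl hm hlm (!u k)
    have hxk : x k = u k := hxR.2 k hk
    refine ⟨x, ⟨evenFace_mono (Finset.subset_insert k S) hxR, .inl hxk⟩, ?_⟩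
    rw [fixedSet_hypercubeReflection hkl]
    simp [hxk, hxl]

theorem reflTransGen_evenFace_insert
    (hX : {x | Even (hammingDist x u)} ⊆ X₁ ∨ {x | Even (hammingDist x u)} ⊆ X₂)
    (hl : l ∈ S) (hm : m ∈ S) (hlm : l ≠ m) (hk : k ∉ S) :
    Relation.ReflTransGen (ReflectionStep (hypercube d) X₁ X₂)
      (evenFace u S) (evenFace u (insert k S)) :=
  .tail (.single (reflectionStep_evenFace_swap hX hl hm hlm hk))
    (reflectionStep_evenFace_flip hX hl hm hlm hk)

theorem reflTransGen_evenFace_univ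
    (hX : {x | Even (hammingDist x u)} ⊆ X₁ ∨ {x | Even (hammingDist x u)} ⊆ X₂)
    (hl : l ∈ S) (hm : m ∈ S) (hlm : l ≠ m) :
    Relation.ReflTransGen (ReflectionStep (hypercube d) X₁ X₂)
      (evenFace u S) (evenFace u Finset.univ) := by
  suffices ∀ T : Finset (Fin d), Relation.ReflTransGen (ReflectionStep (hypercube d) X₁ X₂)
      (evenFace u S) (evenFace u (T ∪ S)) by
    simpa only [Finset.union_eq_left.2 (Finset.subset_univ S)] using this Finset.univ
  intro T
  induction T using Finset.induction_on with
  | empty => simpa using .refl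
  | insert k T _ ih =>
    rw [Finset.insert_union]
    by_cases hk : k ∈ T ∪ S
    · rwa [Finset.insert_eq_of_mem hk]
    exact ih.trans (reflTransGen_evenFace_insert hX (Finset.mem_union_right _ hl)
      (Finset.mem_union_right _ hm) hlm hk)

theorem reflTransGen_pair_evenFace_univ
    (hX : {x | Even (hammingDist x u)} ⊆ X₁ ∨ {x | Even (hammingDist x u)} ⊆ X₂)
    {v : Fin d → Bool} (hv : Even (hammingDist v u)) (huv : u ≠ v) :
    Relation.ReflTransGen (ReflectionStep (hypercube d) X₁ X₂)
      {u, v} (evenFace u Finset.univ) := by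
  have hvu : 1 < hammingDist v u := by
    have := hammingDist_ne_zero.mpr huv.symm
    obtain ⟨r, hr⟩ := hv
    omega
  obtain ⟨k, hk, l, hl, hkl⟩ := Finset.one_lt_card.mp hvu
  simp only [Finset.mem_filter, Finset.mem_univ, true_and] at hk hl
  have hpair : ({u, v} : Set (Fin d → Bool)) ⊆ {x | Even (hammingDist x u)} := by
    simp [Set.insert_subset_iff, hv]
  refine .head (reflectionStep_pair (isNiceTriple_hypercubeReflection hkl
    (s := !(xor (u k) (u l))) (by simp)) (hX.imp hpair.trans hpair.trans) (u := u) ⟨rfl, rfl⟩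
    ⟨Bool.eq_not_of_ne hk, Bool.eq_not_of_ne hl⟩) ?_
  rw [coe_hypercubeReflection, ← evenFace_pair hkl]
  exact reflTransGen_evenFace_univ hX (by simp) (by simp) hkl

end EvenFace

theorem hypercube_reflective (d : ℕ) :
    IsReflective (hypercube d)
      {x : Fin d → Bool | Even ((Finset.univ.filter fun i => x i = true).card)}
      {x : Fin d → Bool | Odd ((Finset.univ.filter fun i => x i = true).card)} := by
  refine isReflective_of_reflTransGen fun X hX R hRX hR => ?_
  obtain ⟨u, v, huv, rfl⟩ := Set.ncard_eq_two.mp hR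
  have hXu := eq_setOf_even_hammingDist hX (hRX (Set.mem_insert u {v}))
  rw [hXu] at hX hRX
  rw [hXu, ← evenFace_univ]
  exact reflTransGen_pair_evenFace_univ (hX.imp Eq.subset Eq.subset)
    (hRX (Set.mem_insert_of_mem u rfl)) huv
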